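/- arXiv:1910.14534 — 3 statements merged into one kernel-verified Lean document; each statement's English description precedes it below -/
import Mathlib

section
/- Let 𝓐 and 𝓑 be Grothendieck abelian categories, let G : 𝓑 → 𝓐 be an exact additive functor, and let F : 𝓐 → 𝓑 be a right adjoint of G (hence F is left exact). Then the total right derived functor RF : D(𝓐) → D(𝓑) is right adjoint to the induced functor D(G) : D(𝓑) → D(𝓐) on unbounded derived categories. -/
/-!
Statement 1 (Proposition A.3 of the paper): let `A`, `B` be Grothendieck abelian categories,
`G : B ⥤ A` an exact additive functor and `F : A ⥤ B` a right adjoint of `G` (hence `F` is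
left exact). Then the total right derived functor `RF = Qh ∘ K(F) ∘ ρ : D(A) ⥤ D(B)` is
right adjoint to the induced functor `D(G) : D(B) ⥤ D(A)`.

Here `ρ` is a right adjoint of the localization functor `Qh : K(A) → D(A)`
(homotopically injective resolutions), so that `RF := ρ ⋙ K(F) ⋙ Qh`.
-/

open CategoryTheory Limits

universe w w' v u u'

/-- An adjunction `G ⊣ F` between additive functors induces, degreewise, an adjunction
between the induced functors on categories of homological complexes. -/
noncomputable def adjMapHC {A : Type*} [Category A] {B : Type*} [Category B]
    [Preadditive A] [Preadditive B]
    {G : B ⥤ A} {F : A ⥤ B} [G.Additive] [F.Additive] (adj : G ⊣ F)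
    {ι : Type*} (c : ComplexShape ι) :
    G.mapHomologicalComplex c ⊣ F.mapHomologicalComplex c :=
  Adjunction.mkOfUnitCounit
    { unit :=
        { app := fun X =>
            { f := fun i => adj.unit.app (X.X i)
              comm' := by intros; simp; exact (adj.unit.naturality _).symm }
          naturality := by intros; ext i; simp; exact adj.unit.naturality _ }
      counit :=
        { app := fun Y =>
            { f := fun i => adj.counit.app (Y.X i)
              comm' := by intros; simp; exact (adj.counit.naturality _).symm }
          naturality := by intros; ext i; simp; exact adj.counit.naturality _ }
      left_triangle := by ext X i; simp; exact adj.left_triangle_components _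
      right_triangle := by ext Y i; simp; exact adj.right_triangle_components _ }

theorem stmt_1
    {A : Type u} [Category.{v} A] [Abelian A] [HasColimits A] [AB5 A] [HasSeparator A]
    [HasDerivedCategory.{w} A]
    {B : Type u'} [Category.{v} B] [Abelian B] [HasColimits B] [AB5 B] [HasSeparator B]
    [HasDerivedCategory.{w'} B]
    (G : B ⥤ A) [G.Additive] [PreservesFiniteLimits G] [PreservesFiniteColimits G]
    (F : A ⥤ B) [F.Additive] [PreservesFiniteLimits F]
    (adj : G ⊣ F)
    -- homotopically injective resolutions: a right adjoint of `Qh : K(A) ⥤ D(A)`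
    (ρ : DerivedCategory A ⥤ HomotopyCategory A (ComplexShape.up ℤ))
    (adjρ : DerivedCategory.Qh ⊣ ρ) :
    Nonempty (G.mapDerivedCategory ⊣
      ρ ⋙ F.mapHomotopyCategory (ComplexShape.up ℤ) ⋙ DerivedCategory.Qh) := by
  have hc : ∀ (j : ℤ), ∃ i, (ComplexShape.up ℤ).Rel i j := fun j => ⟨j - 1, by simp⟩
  haveI : (HomotopyCategory.quotient B (ComplexShape.up ℤ)).IsLocalization
      (HomologicalComplex.homotopyEquivalences B (ComplexShape.up ℤ)) :=
    (ComplexShape.up ℤ).quotient_isLocalization hc B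
  haveI : (HomotopyCategory.quotient A (ComplexShape.up ℤ)).IsLocalization
      (HomologicalComplex.homotopyEquivalences A (ComplexShape.up ℤ)) :=
    (ComplexShape.up ℤ).quotient_isLocalization hc A
  haveI : CatCommSq (G.mapHomologicalComplex (ComplexShape.up ℤ))
      (HomotopyCategory.quotient B (ComplexShape.up ℤ))
      (HomotopyCategory.quotient A (ComplexShape.up ℤ))
      (G.mapHomotopyCategory (ComplexShape.up ℤ)) :=
    ⟨(G.mapHomotopyCategoryFactors (ComplexShape.up ℤ)).symm⟩
  haveI : CatCommSq (F.mapHomologicalComplex (ComplexShape.up ℤ))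
      (HomotopyCategory.quotient A (ComplexShape.up ℤ))
      (HomotopyCategory.quotient B (ComplexShape.up ℤ))
      (F.mapHomotopyCategory (ComplexShape.up ℤ)) :=
    ⟨(F.mapHomotopyCategoryFactors (ComplexShape.up ℤ)).symm⟩
  -- the adjunction `K(G) ⊣ K(F)` on homotopy categories
  have adjK : G.mapHomotopyCategory (ComplexShape.up ℤ) ⊣
      F.mapHomotopyCategory (ComplexShape.up ℤ) :=
    (adjMapHC adj (ComplexShape.up ℤ)).localization
      (HomotopyCategory.quotient B (ComplexShape.up ℤ))
      (HomologicalComplex.homotopyEquivalences B (ComplexShape.up ℤ))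
      (HomotopyCategory.quotient A (ComplexShape.up ℤ))
      (HomologicalComplex.homotopyEquivalences A (ComplexShape.up ℤ))
      (G.mapHomotopyCategory (ComplexShape.up ℤ))
      (F.mapHomotopyCategory (ComplexShape.up ℤ))
  -- compose with the adjunction `Qh ⊣ ρ`
  have adjBig : (G.mapHomotopyCategory (ComplexShape.up ℤ) ⋙ DerivedCategory.Qh) ⊣
      (ρ ⋙ F.mapHomotopyCategory (ComplexShape.up ℤ)) := adjK.comp adjρ
  -- localize once more, with respect to quasi-isomorphisms on the source
  -- and isomorphisms (the identity localization) on the target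
  haveI : (𝟭 (DerivedCategory A)).IsLocalization
      (MorphismProperty.isomorphisms (DerivedCategory A)) :=
    Functor.IsLocalization.for_id _ le_rfl
  haveI : CatCommSq (G.mapHomotopyCategory (ComplexShape.up ℤ) ⋙ DerivedCategory.Qh)
      DerivedCategory.Qh (𝟭 (DerivedCategory A)) G.mapDerivedCategory :=
    ⟨Functor.rightUnitor _ ≪≫ G.mapDerivedCategoryFactorsh.symm⟩
  haveI : CatCommSq (ρ ⋙ F.mapHomotopyCategory (ComplexShape.up ℤ))
      (𝟭 (DerivedCategory A)) DerivedCategory.Qh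
      (ρ ⋙ F.mapHomotopyCategory (ComplexShape.up ℤ) ⋙ DerivedCategory.Qh) :=
    ⟨(Functor.associator _ _ _) ≪≫ (Functor.leftUnitor _).symm⟩
  exact ⟨adjBig.localization DerivedCategory.Qh
    (HomotopyCategory.quasiIso B (ComplexShape.up ℤ))
    (𝟭 (DerivedCategory A))
    (MorphismProperty.isomorphisms (DerivedCategory A))
    G.mapDerivedCategory
    (ρ ⋙ F.mapHomotopyCategory (ComplexShape.up ℤ) ⋙ DerivedCategory.Qh)⟩
end

section
/- Let 𝓐 →F 𝓑 →G 𝓒 be a chain of left exact additive functors between Grothendieck abelian categories. The canonical natural transformation R(G∘F) ⇒ RG ∘ RF is an isomorphism if and only if F carries homotopically injective complexes to G-acyclic complexes. In particular, if G is exact, then R(G∘F) ⇒ RG ∘ RF is an isomorphism. -/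
/-!
Statement 2 (Lemma A.2 of the paper): for a chain `A ⥤F B ⥤G Cc` of left exact additive
functors between Grothendieck abelian categories, the canonical natural transformation
`R(G∘F) ⇒ RG ∘ RF` (induced by the unit of the adjunction `(Qh, ρB)`) is an isomorphism
if and only if `F` carries homotopically injective complexes to `G`-acyclic complexes.
In particular it is an isomorphism if `G` is exact.

Here, for a Grothendieck abelian category, `ρ` denotes a (hypothesized) right adjoint of
the localization functor `Qh : K(−) ⥤ D(−)`; total right derived functors are defined by
`RF := ρA ⋙ K(F) ⋙ Qh`, `RG := ρB ⋙ K(G) ⋙ Qh` and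
`R(G∘F) := ρA ⋙ K(F) ⋙ K(G) ⋙ Qh`. A complex `K ∈ K(B)` is `G`-acyclic if the canonical
morphism `Qh(K(G)(K)) ⟶ RG(Qh(K))`, i.e. `Qh.map (K(G).map (unit.app K))`, is an
isomorphism, and a complex of `A` is homotopically injective if it lies in the essential
image of `ρA`.
-/

open CategoryTheory Limits

universe w₁ w₂ w₃ v u₁ u₂ u₃

variable {A : Type u₁} [Category.{v} A] [Abelian A] [HasDerivedCategory.{w₁} A]
  {B : Type u₂} [Category.{v} B] [Abelian B] [HasDerivedCategory.{w₂} B]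
  {Cc : Type u₃} [Category.{v} Cc] [Abelian Cc] [HasDerivedCategory.{w₃} Cc]


lemma isIso_map_unit_app_of_isLocalization {C D : Type*} [Category C] [Category D]
    (L : C ⥤ D) (W : MorphismProperty C) [L.IsLocalization W] {R : D ⥤ C} (adj : L ⊣ R)
    (X : C) : IsIso (L.map (adj.unit.app X)) := by
  haveI := Localization.full_whiskeringLeft L W D
  obtain ⟨σ, hσ⟩ := ((Functor.whiskeringLeft C D D).obj L).map_surjective
    (X := 𝟭 D) (Y := R ⋙ L)
    (show L ⋙ 𝟭 D ⟶ L ⋙ (R ⋙ L) from Functor.whiskerRight adj.unit L)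
  have happ : ∀ (Y : C), σ.app (L.obj Y) = L.map (adj.unit.app Y) := fun Y => by
    have := congr_arg (fun (τ : L ⋙ 𝟭 D ⟶ L ⋙ (R ⋙ L)) => τ.app Y) hσ
    simpa using this
  have eq1 : σ ≫ adj.counit = 𝟙 (𝟭 D) := by
    apply Localization.natTrans_ext L W
    intro Y
    simp [happ Y]
  have eq2 : adj.counit ≫ σ = 𝟙 (R ⋙ L) := by
    apply Localization.natTrans_ext L W
    intro Y
    have hnat := σ.naturality (adj.counit.app (L.obj Y))
    dsimp at hnat ⊢
    rw [hnat, happ, ← L.map_comp, adj.right_triangle_components]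
    simp
  have : IsIso σ := ⟨adj.counit, eq1, eq2⟩
  have : IsIso (σ.app (L.obj X)) := inferInstance
  rwa [happ X] at this

/-- The canonical natural transformation `R(G∘F) ⟶ RF ⋙ RG` induced by the unit of the
adjunction `(Qh, ρB)`. -/
noncomputable def canonicalDerivedCompTrans
    (F : A ⥤ B) [F.Additive] (G : B ⥤ Cc) [G.Additive]
    (ρA : DerivedCategory A ⥤ HomotopyCategory A (ComplexShape.up ℤ))
    (ρB : DerivedCategory B ⥤ HomotopyCategory B (ComplexShape.up ℤ))
    (adjB : DerivedCategory.Qh ⊣ ρB) :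
    (ρA ⋙ F.mapHomotopyCategory (ComplexShape.up ℤ) ⋙
        G.mapHomotopyCategory (ComplexShape.up ℤ) ⋙ DerivedCategory.Qh) ⟶
      ((ρA ⋙ F.mapHomotopyCategory (ComplexShape.up ℤ) ⋙ DerivedCategory.Qh) ⋙
        (ρB ⋙ G.mapHomotopyCategory (ComplexShape.up ℤ) ⋙ DerivedCategory.Qh)) :=
  Functor.whiskerLeft (ρA ⋙ F.mapHomotopyCategory (ComplexShape.up ℤ))
    (Functor.whiskerRight adjB.unit
      (G.mapHomotopyCategory (ComplexShape.up ℤ) ⋙ DerivedCategory.Qh))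

theorem stmt_2
    [HasColimits A] [AB5 A] [HasSeparator A]
    [HasColimits B] [AB5 B] [HasSeparator B]
    [HasColimits Cc] [AB5 Cc] [HasSeparator Cc]
    (F : A ⥤ B) [F.Additive] [PreservesFiniteLimits F]
    (G : B ⥤ Cc) [G.Additive] [PreservesFiniteLimits G]
    (ρA : DerivedCategory A ⥤ HomotopyCategory A (ComplexShape.up ℤ))
    (adjA : DerivedCategory.Qh ⊣ ρA)
    (ρB : DerivedCategory B ⥤ HomotopyCategory B (ComplexShape.up ℤ))
    (adjB : DerivedCategory.Qh ⊣ ρB) :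
    (IsIso (canonicalDerivedCompTrans F G ρA ρB adjB) ↔
      ∀ K : HomotopyCategory A (ComplexShape.up ℤ), ρA.essImage K →
        IsIso (DerivedCategory.Qh.map ((G.mapHomotopyCategory (ComplexShape.up ℤ)).map
          (adjB.unit.app ((F.mapHomotopyCategory (ComplexShape.up ℤ)).obj K))))) ∧
    (Nonempty (PreservesFiniteColimits G) →
      IsIso (canonicalDerivedCompTrans F G ρA ρB adjB)) := by
  classical
  have key : ∀ (L : HomotopyCategory B (ComplexShape.up ℤ)),
      IsIso (DerivedCategory.Qh.map (adjB.unit.app L)) := fun L =>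
    isIso_map_unit_app_of_isLocalization DerivedCategory.Qh
      (HomotopyCategory.quasiIso B (ComplexShape.up ℤ)) adjB L
  let θ : (F.mapHomotopyCategory (ComplexShape.up ℤ) ⋙
        G.mapHomotopyCategory (ComplexShape.up ℤ) ⋙ DerivedCategory.Qh) ⟶
      (F.mapHomotopyCategory (ComplexShape.up ℤ) ⋙
        (DerivedCategory.Qh ⋙ ρB) ⋙ G.mapHomotopyCategory (ComplexShape.up ℤ) ⋙
          DerivedCategory.Qh) :=
    Functor.whiskerLeft (F.mapHomotopyCategory (ComplexShape.up ℤ))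
      (Functor.whiskerRight adjB.unit
        (G.mapHomotopyCategory (ComplexShape.up ℤ) ⋙ DerivedCategory.Qh))
  constructor
  · constructor
    · intro h K hK
      obtain ⟨X, ⟨e⟩⟩ := hK
      have h1 : IsIso ((canonicalDerivedCompTrans F G ρA ρB adjB).app X) := inferInstance
      have h2 : IsIso (θ.app (ρA.obj X)) := h1
      have h3 : IsIso ((F.mapHomotopyCategory (ComplexShape.up ℤ) ⋙
          G.mapHomotopyCategory (ComplexShape.up ℤ) ⋙ DerivedCategory.Qh).map e.hom ≫
            θ.app K) := by
        rw [θ.naturality e.hom]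
        infer_instance
      exact IsIso.of_isIso_comp_left ((F.mapHomotopyCategory (ComplexShape.up ℤ) ⋙
          G.mapHomotopyCategory (ComplexShape.up ℤ) ⋙ DerivedCategory.Qh).map e.hom)
        (θ.app K)
    · intro h
      have : ∀ X, IsIso ((canonicalDerivedCompTrans F G ρA ρB adjB).app X) :=
        fun X => h (ρA.obj X) ⟨X, ⟨Iso.refl _⟩⟩
      exact NatIso.isIso_of_isIso_app _
  · rintro ⟨hG⟩
    haveI := hG
    have : ∀ X, IsIso ((canonicalDerivedCompTrans F G ρA ρB adjB).app X) := by
      intro X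
      set g := adjB.unit.app ((F.mapHomotopyCategory (ComplexShape.up ℤ)).obj (ρA.obj X))
      have h1 : IsIso ((DerivedCategory.Qh ⋙ G.mapDerivedCategory).map g) := by
        haveI := key ((F.mapHomotopyCategory (ComplexShape.up ℤ)).obj (ρA.obj X))
        dsimp [Functor.comp]
        infer_instance
      exact (NatIso.isIso_map_iff G.mapDerivedCategoryFactorsh g).1 h1
    exact NatIso.isIso_of_isIso_app _
end

section
/- Let 𝓒 and 𝓓 be abelian categories, let 𝓒' ⊆ 𝓒 and 𝓓' ⊆ 𝓓 be full abelian subcategories with inclusion functors i_𝓒 : 𝓒' → 𝓒 and i_𝓓 : 𝓓' → 𝓓, and let c : 𝓒 → 𝓓 and c' : 𝓒' → 𝓓' be additive functors satisfying c ∘ i_𝓒 = i_𝓓 ∘ c'. Suppose that i_𝓒 and i_𝓓 have left adjoints a_𝓒 and a_𝓓, that a_𝓓 is exact, and that a_𝓓 ∘ c ≅ c' ∘ a_𝓒. If c is exact, then c' is exact. -/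
/-!
Left exactness of `c'` is inherited from `c' ≅ iC ⋙ c ⋙ aD`, a composite of left exact
functors (`iC` is a right adjoint, and `iD ⋙ aD ≅ 𝟭` because `iD` is fully faithful).
Right exactness comes from `aC ⋙ c' ≅ c ⋙ aD`: every diagram in `C'` is, up to the counit
isomorphism `iC ⋙ aC ≅ 𝟭`, the image under `aC` of a diagram in `C`, and `aC` preserves its
colimit.
-/

open CategoryTheory Limits

universe v₁ v₂ v₃ v₄ u₁ u₂ u₃ u₄

section

variable {A B E J : Type*} [Category A] [Category B] [Category E] [Category J]

lemma preservesColimit_comp_of_preservesColimit (L : A ⥤ B) (H : B ⥤ E) (K : J ⥤ A)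
    [HasColimit K] [PreservesColimit K L] [PreservesColimit K (L ⋙ H)] :
    PreservesColimit (K ⋙ L) H :=
  preservesColimit_of_preserves_colimit_cocone (isColimitOfPreserves L (colimit.isColimit K))
    (isColimitOfPreserves (L ⋙ H) (colimit.isColimit K))

lemma preservesColimitsOfShape_of_comp_of_rightInverse (L : A ⥤ B) (R : B ⥤ A)
    (ε : R ⋙ L ≅ 𝟭 B) (H : B ⥤ E) [HasColimitsOfShape J A]
    [PreservesColimitsOfShape J L] [PreservesColimitsOfShape J (L ⋙ H)] :
    PreservesColimitsOfShape J H where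
  preservesColimit {F} :=
    have := preservesColimit_comp_of_preservesColimit L H (F ⋙ R)
    preservesColimit_of_iso_diagram H
      (Functor.associator _ _ _ ≪≫ Functor.isoWhiskerLeft F ε ≪≫ F.rightUnitor)

lemma CategoryTheory.Adjunction.preservesFiniteColimits_of_comp_of_reflective
    {L : A ⥤ B} {R : B ⥤ A} (adj : L ⊣ R) [R.Full] [R.Faithful] (H : B ⥤ E) [HasFiniteColimits A]
    [PreservesFiniteColimits (L ⋙ H)] : PreservesFiniteColimits H where
  preservesFiniteColimits _ _ _ :=
    have := adj.leftAdjoint_preservesColimits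
    preservesColimitsOfShape_of_comp_of_rightInverse L R (asIso adj.counit) H

end

theorem stmt_17_general
    {C : Type u₁} [Category.{v₁} C] [Abelian C]
    {D : Type u₂} [Category.{v₂} D]
    {C' : Type u₃} [Category.{v₃} C']
    {D' : Type u₄} [Category.{v₄} D']
    (iC : C' ⥤ C) [iC.Full] [iC.Faithful]
    (iD : D' ⥤ D) [iD.Full] [iD.Faithful]
    (c : C ⥤ D) (c' : C' ⥤ D')
    (e : iC ⋙ c ≅ c' ⋙ iD)
    (aC : C ⥤ C') (adjC : aC ⊣ iC)
    (aD : D ⥤ D') (adjD : aD ⊣ iD)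
    [PreservesFiniteLimits aD] [PreservesFiniteColimits aD]
    (e' : c ⋙ aD ≅ aC ⋙ c')
    [PreservesFiniteLimits c] [PreservesFiniteColimits c] :
    Nonempty (PreservesFiniteLimits c') ∧ Nonempty (PreservesFiniteColimits c') := by
  have := adjC.rightAdjoint_preservesLimits
  have hc' : iC ⋙ c ⋙ aD ≅ c' :=
    (Functor.associator _ _ _).symm ≪≫ Functor.isoWhiskerRight e aD ≪≫ Functor.associator _ _ _
      ≪≫ Functor.isoWhiskerLeft c' (asIso adjD.counit) ≪≫ c'.rightUnitor
  have : PreservesFiniteColimits (aC ⋙ c') := preservesFiniteColimits_of_natIso e'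
  exact ⟨⟨preservesFiniteLimits_of_natIso hc'⟩,
    ⟨adjC.preservesFiniteColimits_of_comp_of_reflective c'⟩⟩

theorem stmt_17
    {C : Type u₁} [Category.{v₁} C] [Abelian C]
    {D : Type u₂} [Category.{v₂} D] [Abelian D]
    {C' : Type u₃} [Category.{v₃} C'] [Abelian C']
    {D' : Type u₄} [Category.{v₄} D'] [Abelian D']
    (iC : C' ⥤ C) [iC.Full] [iC.Faithful] [iC.Additive]
    (iD : D' ⥤ D) [iD.Full] [iD.Faithful] [iD.Additive]
    (c : C ⥤ D) [c.Additive] (c' : C' ⥤ D') [c'.Additive]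
    (e : iC ⋙ c ≅ c' ⋙ iD)
    (aC : C ⥤ C') (adjC : aC ⊣ iC)
    (aD : D ⥤ D') (adjD : aD ⊣ iD)
    [PreservesFiniteLimits aD] [PreservesFiniteColimits aD]
    (e' : c ⋙ aD ≅ aC ⋙ c')
    [PreservesFiniteLimits c] [PreservesFiniteColimits c] :
    Nonempty (PreservesFiniteLimits c') ∧ Nonempty (PreservesFiniteColimits c') :=
  stmt_17_general iC iD c c' e aC adjC aD adjD e'
end
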